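/- arXiv:2504.18677 — 2 statements merged into one kernel-verified Lean document; each statement's English description precedes it below -/
import Mathlib

section
/- Let θ > 1, σ₀ > 0, α ∈ (0,1) be fixed. With H_RQMC(N)/H_MC(N) the ratio of Bennett half widths at n = n*(N) and n = 1 respectively, one has H_RQMC(N)/H_MC(N) = Θ(N^{(1-θ)/(2θ+2)}) as N → ∞. -/
open Real

/-- `H_RQMC(N)/H_MC(N) = Θ(N^{(1-θ)/(2θ+2)})` as `N → ∞`. -/
theorem bennett_width_ratio_theta
    (α σ₀ θ : ℝ) (hα : α ∈ Set.Ioo (0:ℝ) 1) (hσ : 0 < σ₀) (hθ : 1 < θ)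
    (H : ℝ → ℝ → ℝ)
    (hH : ∀ N n : ℝ, H N n =
      σ₀ * n ^ ((1 - θ) / 2) * Real.sqrt (2 * Real.log (2 / α) / N)
        + (Real.log (2 / α) / 3) * (n / N))
    (nstar : ℝ → ℝ)
    (hnstar : ∀ N : ℝ, nstar N =
      (9 * (θ - 1)^2 * σ₀^2 * N / (2 * Real.log (2 / α))) ^ (1 / (θ + 1))) :
    ∃ c C N₀ : ℝ, 0 < c ∧ 0 < C ∧ 0 < N₀ ∧ ∀ N ≥ N₀,
      c * N ^ ((1 - θ) / (2 * θ + 2)) ≤ H N (nstar N) / H N 1 ∧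
      H N (nstar N) / H N 1 ≤ C * N ^ ((1 - θ) / (2 * θ + 2)) := by
  obtain ⟨hα0, hα1⟩ := hα
  set L : ℝ := Real.log (2 / α) with hLdef
  have hL : 0 < L := Real.log_pos (by rw [lt_div_iff₀ hα0]; linarith)
  have hθ1 : (0:ℝ) < θ + 1 := by linarith
  have hθm : (0:ℝ) < θ - 1 := by linarith
  set K : ℝ := 9 * (θ - 1)^2 * σ₀^2 / (2 * L) with hKdef
  have hK : 0 < K := by positivity
  set p : ℝ := (1 - θ) / (2 * θ + 2) with hpdef
  set e : ℝ := 1 / (θ + 1) with hedef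
  have hne : θ + 1 ≠ 0 := hθ1.ne'
  have hep : e * ((1 - θ) / 2) = p := by
    rw [hedef, hpdef, div_mul_div_comm, one_mul]
    congr 1; ring
  set A : ℝ := σ₀ * K ^ p * (2 * L) ^ ((1:ℝ)/2) + L / 3 * K ^ e with hAdef
  set B₁ : ℝ := σ₀ * (2 * L) ^ ((1:ℝ)/2) with hB1def
  set B₂ : ℝ := B₁ + L / 3 with hB2def
  have hA : 0 < A := by positivity
  have hB1 : 0 < B₁ := by positivity
  have hB2 : 0 < B₂ := by positivity
  refine ⟨A / B₂, A / B₁, 1, div_pos hA hB2, div_pos hA hB1, one_pos, ?_⟩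
  intro N hN
  have hN0 : (0:ℝ) < N := lt_of_lt_of_le one_pos hN
  have hxpos : (0:ℝ) < N ^ (-(1/2) : ℝ) := Real.rpow_pos_of_pos hN0 _
  have hppos : (0:ℝ) < N ^ p := Real.rpow_pos_of_pos hN0 _
  -- sqrt term
  have t2 : Real.sqrt (2 * L / N) = (2 * L) ^ ((1:ℝ)/2) * N ^ (-(1/2) : ℝ) := by
    rw [Real.sqrt_eq_rpow, Real.div_rpow (by positivity) hN0.le,
      Real.rpow_neg hN0.le, div_eq_mul_inv]
  -- the n = n*(N) value
  have key1 : H N (nstar N) = A * (N ^ p * N ^ (-(1/2) : ℝ)) := by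
    have harg : 9 * (θ - 1)^2 * σ₀^2 * N / (2 * L) = K * N := by
      rw [hKdef]; ring
    have t1 : ((K * N) ^ e) ^ ((1 - θ) / 2) = K ^ p * N ^ p := by
      rw [← Real.rpow_mul (by positivity), hep, Real.mul_rpow hK.le hN0.le]
    have t3 : (K * N) ^ e / N = K ^ e * (N ^ p * N ^ (-(1/2) : ℝ)) := by
      have hexp : e = p + (-(1/2) : ℝ) + 1 := by
        rw [hedef, hpdef]; field_simp; ring
      have hNe : N ^ e = N ^ (p + (-(1/2) : ℝ)) * N := by
        rw [hexp, Real.rpow_add hN0, Real.rpow_one]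
      rw [Real.mul_rpow hK.le hN0.le, mul_div_assoc, hNe, mul_div_assoc,
        div_self hN0.ne', mul_one, Real.rpow_add hN0]
    rw [hH, hnstar, harg, t1, t2, t3, hAdef]
    ring
  -- bounds on H N 1
  have h1 : H N 1 = σ₀ * (2 * L) ^ ((1:ℝ)/2) * N ^ (-(1/2) : ℝ) + L / 3 * N⁻¹ := by
    rw [hH, Real.one_rpow, t2]; ring
  have hHub : H N 1 ≤ B₂ * N ^ (-(1/2) : ℝ) := by
    rw [h1, hB2def, hB1def]
    have : N⁻¹ ≤ N ^ (-(1/2) : ℝ) := by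
      rw [← Real.rpow_neg_one N]
      exact Real.rpow_le_rpow_of_exponent_le hN (by norm_num)
    nlinarith [hL, hσ, Real.rpow_nonneg (by positivity : (0:ℝ) ≤ 2 * L) ((1:ℝ)/2)]
  have hHlb : B₁ * N ^ (-(1/2) : ℝ) ≤ H N 1 := by
    rw [h1, hB1def]
    have : (0:ℝ) ≤ L / 3 * N⁻¹ := by positivity
    nlinarith
  have hH1pos : 0 < H N 1 := lt_of_lt_of_le (by positivity) hHlb
  have hnum : 0 ≤ A * (N ^ p * N ^ (-(1/2) : ℝ)) := by positivity
  constructor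
  · have step : A * (N ^ p * N ^ (-(1/2) : ℝ)) / (B₂ * N ^ (-(1/2) : ℝ))
        ≤ A * (N ^ p * N ^ (-(1/2) : ℝ)) / H N 1 := by
      gcongr
    have heq : A * (N ^ p * N ^ (-(1/2) : ℝ)) / (B₂ * N ^ (-(1/2) : ℝ))
        = A / B₂ * N ^ p := by
      field_simp
    rw [key1, ← heq]
    exact step
  · have step : A * (N ^ p * N ^ (-(1/2) : ℝ)) / H N 1
        ≤ A * (N ^ p * N ^ (-(1/2) : ℝ)) / (B₁ * N ^ (-(1/2) : ℝ)) := by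
      gcongr
    have heq : A * (N ^ p * N ^ (-(1/2) : ℝ)) / (B₁ * N ^ (-(1/2) : ℝ))
        = A / B₁ * N ^ p := by
      field_simp
    rw [key1, ← heq]
    exact step
end

section
/- Let f : [0,1] → ℝ be monotone (or of bounded variation with total variation V) and let x_1, …, x_n be a stratified sample with x_ℓ ∼ U[(ℓ−1)/n, ℓ/n] independent. Then Var((1/n)∑_ℓ f(x_ℓ)) ≤ V²/n², where V is the total variation of f on [0,1]. -/
/-!
On the stratum `Iₗ = [ℓ/n, (ℓ+1)/n]` the value `f(xₗ)` stays within `vₗ` of `f(ℓ/n)`, where `vₗ`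
is the variation of `f` on `Iₗ`, so by Popoviciu's inequality `Var f(xₗ) ≤ vₗ²`. Independence
makes the variance of the sum the sum of these, and `∑ vₗ² ≤ (∑ vₗ)² ≤ V²` because variation is
additive over adjacent intervals.
-/

open MeasureTheory ProbabilityTheory Set

theorem Icc_div_subset_Icc_zero_one {n : ℕ} (ℓ : Fin n) :
    Icc ((ℓ : ℝ) / n) (((ℓ : ℝ) + 1) / n) ⊆ Icc 0 1 := by
  have hn : (0 : ℝ) < n := by exact_mod_cast ℓ.pos
  refine Icc_subset_Icc (by positivity) ((div_le_one hn).2 ?_)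
  exact_mod_cast ℓ.isLt

theorem eVariationOn.sum_Icc_div_le {E : Type*} [PseudoEMetricSpace E] (f : ℝ → E) (n : ℕ) :
    ∑ ℓ : Fin n, eVariationOn f (Icc ((ℓ : ℝ) / n) (((ℓ : ℝ) + 1) / n)) ≤
      eVariationOn f (Icc 0 1) := by
  have hmono : Monotone fun i : ℕ => (i : ℝ) / n := fun _ _ hij =>
    div_le_div_of_nonneg_right (Nat.cast_le.mpr hij) n.cast_nonneg
  have hsum := eVariationOn.sum' f hmono (n := n)
  push_cast at hsum
  rw [Fin.sum_univ_eq_sum_range (fun i => eVariationOn f (Icc ((i : ℝ) / n) (((i : ℝ) + 1) / n))),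
    hsum]
  exact eVariationOn.mono f (Icc_subset_Icc (by simp) (div_self_le_one _))

theorem BoundedVariationOn.sum_toReal_eVariationOn_Icc_div_le {E : Type*} [PseudoEMetricSpace E]
    {f : ℝ → E} (hf : BoundedVariationOn f (Icc 0 1)) (n : ℕ) :
    ∑ ℓ : Fin n, (eVariationOn f (Icc ((ℓ : ℝ) / n) (((ℓ : ℝ) + 1) / n))).toReal ≤
      (eVariationOn f (Icc 0 1)).toReal := by
  rw [← ENNReal.toReal_sum fun ℓ _ => hf.mono (Icc_div_subset_Icc_zero_one ℓ)]
  exact ENNReal.toReal_mono hf (eVariationOn.sum_Icc_div_le f n)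

theorem sum_sq_toReal_eVariationOn_Icc_div_le_sq {f : ℝ → ℝ} {V : ℝ}
    (hV : eVariationOn f (Icc 0 1) = ENNReal.ofReal V) (n : ℕ) :
    ∑ ℓ : Fin n, (eVariationOn f (Icc ((ℓ : ℝ) / n) (((ℓ : ℝ) + 1) / n))).toReal ^ 2 ≤ V ^ 2 := by
  have hBV : BoundedVariationOn f (Icc 0 1) := by simp [BoundedVariationOn, hV]
  refine (Finset.sum_sq_le_sq_sum_of_nonneg fun ℓ _ => ENNReal.toReal_nonneg).trans ?_
  rw [← sq_abs V]
  gcongr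
  refine (hBV.sum_toReal_eVariationOn_Icc_div_le n).trans ?_
  rw [hV, ENNReal.toReal_ofReal']
  exact max_le (le_abs_self V) (abs_nonneg V)

theorem BoundedVariationOn.apply_mem_Icc {α : Type*} [LinearOrder α] {f : α → ℝ} {s : Set α}
    (hf : BoundedVariationOn f s) {x c : α} (hx : x ∈ s) (hc : c ∈ s) :
    f x ∈ Icc (f c - (eVariationOn f s).toReal) (f c + (eVariationOn f s).toReal) :=
  ⟨by linarith [hf.sub_le hc hx], by linarith [hf.sub_le hx hc]⟩

theorem LocallyBoundedVariationOn.aemeasurable_restrict {α : Type*} [LinearOrder α]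
    [TopologicalSpace α] [OrderClosedTopology α] [MeasurableSpace α] [BorelSpace α]
    {f : α → ℝ} {s : Set α} (hf : LocallyBoundedVariationOn f s) (hs : MeasurableSet s)
    {μ : Measure α} : AEMeasurable f (μ.restrict s) := by
  obtain ⟨p, q, hp, hq, rfl⟩ := hf.exists_monotoneOn_sub_monotoneOn
  exact (aemeasurable_restrict_of_monotoneOn hs hp).sub (aemeasurable_restrict_of_monotoneOn hs hq)

theorem AEMeasurable.comp_ae_eq_mk_comp {Ω E F : Type*} [MeasurableSpace Ω] [MeasurableSpace E]
    [MeasurableSpace F] {P : Measure Ω} {μ : Measure E} {f : E → F} {s : Set E}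
    (hf : AEMeasurable f (μ.restrict s)) {X : Ω → E} (hX : AEMeasurable X P)
    (hac : P.map X ≪ μ) (hmem : ∀ᵐ ω ∂P, X ω ∈ s) :
    f ∘ X =ᵐ[P] hf.mk f ∘ X := by
  filter_upwards [ae_of_ae_map hX (hac.ae_le (ae_imp_of_ae_restrict hf.ae_eq_mk)), hmem]
    with ω hω hωs using hω hωs

theorem MeasureTheory.pdf.IsUniform.ae_mem {Ω E : Type*} [MeasurableSpace Ω] [MeasurableSpace E]
    {P : Measure Ω} {μ : Measure E} {X : Ω → E} {s : Set E} (hu : pdf.IsUniform X s P μ)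
    (hX : AEMeasurable X P) (hs : MeasurableSet s) : ∀ᵐ ω ∂P, X ω ∈ s :=
  ae_of_ae_map hX (hu ▸ ae_cond_mem hs)

theorem ProbabilityTheory.iIndepFun.variance_sum_le {Ω ι : Type*} [MeasurableSpace Ω]
    {μ : Measure Ω} [IsProbabilityMeasure μ] [Fintype ι] {Y : ι → Ω → ℝ}
    (hY : ∀ i, AEMeasurable (Y i) μ) (hind : iIndepFun Y μ) {a b : ι → ℝ}
    (hab : ∀ i, ∀ᵐ ω ∂μ, Y i ω ∈ Icc (a i) (b i)) :
    variance (∑ i, Y i) μ ≤ ∑ i, ((b i - a i) / 2) ^ 2 := by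
  rw [IndepFun.variance_sum (fun i _ => memLp_of_bounded (hab i) (hY i).aestronglyMeasurable 2)
    (fun i _ j _ hij => hind.indepFun hij)]
  exact Finset.sum_le_sum fun i _ => variance_le_sq_of_bounded (hab i) (hY i)

theorem stratified_variance_le_variation_sq_general
    {Ω : Type*} [MeasureSpace Ω] [IsProbabilityMeasure (ℙ : Measure Ω)]
    (n : ℕ) (X : Fin n → Ω → ℝ)
    (hmeas : ∀ ℓ, Measurable (X ℓ))
    (hindep : iIndepFun X ℙ)
    (hunif : ∀ ℓ : Fin n, pdf.IsUniform (X ℓ)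
      (Set.Icc ((ℓ : ℝ) / n) (((ℓ : ℝ) + 1) / n)) ℙ volume)
    (f : ℝ → ℝ)
    (V : ℝ) (hV : eVariationOn f (Set.Icc (0:ℝ) 1) = ENNReal.ofReal V) :
    variance (fun ω => (1 / n : ℝ) * ∑ ℓ, f (X ℓ ω)) ℙ ≤ V^2 / (n:ℝ)^2 := by
  set S : Fin n → Set ℝ := fun ℓ => Icc ((ℓ : ℝ) / n) (((ℓ : ℝ) + 1) / n)
  set v : Fin n → ℝ := fun ℓ => (eVariationOn f (S ℓ)).toReal
  have hBV : BoundedVariationOn f (Icc 0 1) := by simp [BoundedVariationOn, hV]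
  have hmem : ∀ ℓ, ∀ᵐ ω ∂ℙ, X ℓ ω ∈ S ℓ := fun ℓ =>
    (hunif ℓ).ae_mem (hmeas ℓ).aemeasurable measurableSet_Icc
  -- `f` need not be measurable, but it agrees on `[0,1]` a.e. with a measurable `hf.mk f`
  have hf := hBV.locallyBoundedVariationOn.aemeasurable_restrict measurableSet_Icc (μ := volume)
  have hfg : ∀ ℓ, f ∘ X ℓ =ᵐ[ℙ] hf.mk f ∘ X ℓ := fun ℓ =>
    hf.comp_ae_eq_mk_comp (hmeas ℓ).aemeasurable (hunif ℓ).absolutelyContinuous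
      ((hmem ℓ).mono fun _ h => Icc_div_subset_Icc_zero_one ℓ h)
  have hg_mem : ∀ ℓ : Fin n, ∀ᵐ ω ∂ℙ,
      hf.mk f (X ℓ ω) ∈ Icc (f (ℓ / n) - v ℓ) (f (ℓ / n) + v ℓ) := by
    intro ℓ
    filter_upwards [hfg ℓ, hmem ℓ] with ω hω hωS
    rw [← Function.comp_apply (f := hf.mk f), ← hω]
    exact (hBV.mono (Icc_div_subset_Icc_zero_one ℓ)).apply_mem_Icc hωS
      (left_mem_Icc.2 (by gcongr; linarith))
  calc variance (fun ω => (1 / n : ℝ) * ∑ ℓ, f (X ℓ ω)) ℙ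
      = (1 / n) ^ 2 * variance (∑ ℓ, hf.mk f ∘ X ℓ) ℙ := by
        rw [← variance_const_mul]
        refine variance_congr ?_
        filter_upwards [ae_all_iff.2 hfg] with ω hω
        simp only [Finset.sum_apply, ← Function.comp_apply (f := f), hω]
    _ ≤ (1 / n) ^ 2 * ∑ ℓ, v ℓ ^ 2 := by
        gcongr
        refine (iIndepFun.variance_sum_le (fun ℓ => (hf.measurable_mk.comp (hmeas ℓ)).aemeasurable)
          (hindep.comp _ fun _ => hf.measurable_mk) hg_mem).trans_eq ?_
        exact Finset.sum_congr rfl fun ℓ _ => by ring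
    _ ≤ (1 / n) ^ 2 * V ^ 2 := by gcongr; exact sum_sq_toReal_eVariationOn_Icc_div_le_sq hV n
    _ = V ^ 2 / n ^ 2 := by ring

/-- For `f` of bounded variation on `[0,1]` with total variation `V`
(e.g. `f` monotone) and a one-per-stratum stratified sample `x_ℓ ∼ U[(ℓ−1)/n, ℓ/n]`
independent, `Var((1/n)∑_ℓ f(x_ℓ)) ≤ V²/n²`. -/
theorem stratified_variance_le_variation_sq
    {Ω : Type*} [MeasureSpace Ω] [IsProbabilityMeasure (ℙ : Measure Ω)]
    (n : ℕ) (hn : 0 < n) (X : Fin n → Ω → ℝ)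
    (hmeas : ∀ ℓ, Measurable (X ℓ))
    (hindep : iIndepFun X ℙ)
    (hunif : ∀ ℓ : Fin n, pdf.IsUniform (X ℓ)
      (Set.Icc ((ℓ : ℝ) / n) (((ℓ : ℝ) + 1) / n)) ℙ volume)
    (f : ℝ → ℝ) (hf : MonotoneOn f (Set.Icc (0:ℝ) 1))
    (V : ℝ) (hV : eVariationOn f (Set.Icc (0:ℝ) 1) = ENNReal.ofReal V) :
    variance (fun ω => (1 / n : ℝ) * ∑ ℓ, f (X ℓ ω)) ℙ ≤ V^2 / (n:ℝ)^2 :=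
  stratified_variance_le_variation_sq_general n X hmeas hindep hunif f V hV
end
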